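/- Let ρ : (0,∞) → ℝ be C² and r(ξ) = ρ(|ξ|). For ξ = R·e^{iθ} with R > 0, the two focal points of the normal line congruence through ξ, namely Φ(ξ, F(ξ), −ψ(ξ)+|σ(ξ)|) and Φ(ξ, F(ξ), −ψ(ξ)−|σ(ξ)|), are equal, in some order, to the two points (z₁, t₁) and (0, t₂) of ℂ × ℝ, where z₁ = (1/2)·(−R(1+R²)ρ''(R) + (1−3R²)ρ'(R))·e^{iθ}, t₁ = (1/4)·(−(1−R⁴)ρ''(R) − 2R(3−R²)ρ'(R)), and t₂ = −((1+R²)²/(4R))·ρ'(R). -/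

import Mathlib

/-!
For `r(ξ) = ρ(|ξ|)` one has `∂r/∂ξ̄ = ρ'(|ξ|) ξ / (2|ξ|)`, so `F(ξ) = G(|ξ|) ξ` with
`G(s) = (1 + s²)² ρ'(s) / (4s)`: both `F` and `F / (1 + |ξ|²)²` are real radial multiples of `ξ`.
Their Wirtinger derivatives follow from the product rule together with `∂ξ/∂ξ = 1`,
`∂ξ̄/∂ξ = 0` and `∂g(|ξ|)/∂ξ = g'(|ξ|) ξ̄ / (2|ξ|)`. At `|ξ| = R` this gives
`ψ = (1 + R²)² (ρ' + R ρ'') / (8R)` and `|σ| = |s|` with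
`s = (1 + R²) (R (1 + R²) ρ'' + (3R² - 1) ρ') / (8R)`.
Since `η = F` is a real multiple of `ξ`, `Φ(ξ, η, t)` is explicit: the parameter `-ψ + s` lands
on the axis `z = 0` and `-ψ - s` on the profile point, and the sign of `s` decides which of the
two is `-ψ + |σ|`.
-/

open Complex MeasureTheory ComplexConjugate

noncomputable section

/-- Wirtinger derivative ∂/∂ξ of a complex-valued function. -/
def wd (f : ℂ → ℂ) (ξ : ℂ) : ℂ :=
  (1 / 2) * (fderiv ℝ f ξ 1 - Complex.I * fderiv ℝ f ξ Complex.I)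

/-- Wirtinger derivative ∂/∂ξ̄ of a real-valued function, as a complex number. -/
def wdbarR (r : ℂ → ℝ) (ξ : ℂ) : ℂ :=
  (1 / 2) * ((fderiv ℝ r ξ 1 : ℝ) + Complex.I * (fderiv ℝ r ξ Complex.I : ℝ))

/-- F = (1/2)(1+|ξ|²)² ∂r/∂ξ̄. -/
def Fcong (r : ℂ → ℝ) (ξ : ℂ) : ℂ :=
  (1 / 2) * ((1 + Complex.normSq ξ) ^ 2 : ℝ) * wdbarR r ξ

/-- ψ = (1+|ξ|²)² ∂/∂ξ [F/(1+|ξ|²)²] (real-valued). -/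
def psiSlope (r : ℂ → ℝ) (ξ : ℂ) : ℝ :=
  (((1 + Complex.normSq ξ) ^ 2 : ℝ) *
    wd (fun z => Fcong r z / (((1 + Complex.normSq z) ^ 2 : ℝ) : ℂ)) ξ).re

/-- σ = −∂(conj F)/∂ξ. -/
def sigmaSlope (r : ℂ → ℝ) (ξ : ℂ) : ℂ :=
  - wd (fun z => conj (Fcong r z)) ξ

/-- The round sphere area measure in the stereographic coordinate. -/
def muSphere : Measure ℂ :=
  volume.withDensity fun ξ => ENNReal.ofReal (4 / (1 + Complex.normSq ξ) ^ 2)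

/-- Constant width w: r(ξ) + r(−1/conj ξ) = w for all ξ ≠ 0. -/
def ConstWidth (r : ℂ → ℝ) (w : ℝ) : Prop :=
  ∀ ξ : ℂ, ξ ≠ 0 → r ξ + r (-1 / conj ξ) = w

/-- The map `Φ : 𝕃 × ℝ → ℝ³ ≃ ℂ × ℝ` of the correspondence space. -/
def Phi (ξ η : ℂ) (r : ℝ) : ℂ × ℝ :=
  ((2 * (η - conj η * ξ ^ 2) + 2 * ξ * ((1 + Complex.normSq ξ : ℝ) : ℂ) * (r : ℂ))
      / (((1 + Complex.normSq ξ) ^ 2 : ℝ) : ℂ),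
   ((-2 * (η * conj ξ + conj η * ξ)
        + (((1 - Complex.normSq ξ * Complex.normSq ξ) * r : ℝ) : ℂ))).re
      / (1 + Complex.normSq ξ) ^ 2)

open Filter Topology

theorem hasFDerivAt_norm_of_ne_zero {E : Type*} [NormedAddCommGroup E] [InnerProductSpace ℝ E]
    {x : E} (hx : x ≠ 0) : HasFDerivAt (fun z : E => ‖z‖) (‖x‖⁻¹ • innerSL ℝ x) x := by
  have h := (Real.hasDerivAt_sqrt (by positivity)).comp_hasFDerivAt x
    (hasStrictFDerivAt_norm_sq x).hasFDerivAt
  have hfun : ((fun s => √s) ∘ fun z : E => ‖z‖ ^ 2) = fun z => ‖z‖ := by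
    funext z; simp
  rw [hfun] at h
  refine h.congr_fderiv ?_
  ext v
  simp only [smul_apply, coe_innerSL_apply, nsmul_eq_mul, Nat.cast_ofNat, smul_eq_mul,
    Real.sqrt_sq (norm_nonneg x)]
  field_simp

theorem hasFDerivAt_comp_norm {E : Type*} [NormedAddCommGroup E] [InnerProductSpace ℝ E]
    {φ : ℝ → ℝ} {p : ℝ} {x : E} (hx : x ≠ 0) (hφ : HasDerivAt φ p ‖x‖) :
    HasFDerivAt (fun z : E => φ ‖z‖) ((p / ‖x‖) • innerSL ℝ x) x := by
  have h := hφ.comp_hasFDerivAt x (hasFDerivAt_norm_of_ne_zero hx)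
  rwa [smul_smul, ← div_eq_mul_inv] at h

section Wirtinger

variable {f g : ℂ → ℂ} {ξ : ℂ}

theorem HasFDerivAt.wd_eq {L : ℂ →L[ℝ] ℂ} (h : HasFDerivAt f L ξ) :
    wd f ξ = (1 / 2) * (L 1 - I * L I) := by
  rw [wd, h.fderiv]

theorem Filter.EventuallyEq.wd_eq (h : f =ᶠ[𝓝 ξ] g) : wd f ξ = wd g ξ := by
  rw [wd, wd, h.fderiv_eq]

theorem wd_mul (hf : DifferentiableAt ℝ f ξ) (hg : DifferentiableAt ℝ g ξ) :
    wd (fun z => f z * g z) ξ = wd f ξ * g ξ + f ξ * wd g ξ := by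
  rw [wd, wd, wd, fderiv_fun_mul hf hg]
  simp only [add_apply, smul_apply, smul_eq_mul]
  ring

theorem wd_id : wd (fun z => z) ξ = 1 := by
  rw [show wd (fun z => z) ξ = wd id ξ from rfl, (hasFDerivAt_id ξ).wd_eq]
  simp only [ContinuousLinearMap.id_apply, I_mul_I]
  ring

theorem hasFDerivAt_conj : HasFDerivAt (fun z => conj z) conjCLE.toContinuousLinearMap ξ :=
  conjCLE.hasFDerivAt

theorem wd_conj : wd (fun z => conj z) ξ = 0 := by
  rw [hasFDerivAt_conj.wd_eq]
  simp

variable {φ : ℝ → ℝ} {p : ℝ}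

theorem hasFDerivAt_ofReal_comp_norm (hξ : ξ ≠ 0) (hφ : HasDerivAt φ p ‖ξ‖) :
    HasFDerivAt (fun z : ℂ => (φ ‖z‖ : ℂ)) (ofRealCLM.comp ((p / ‖ξ‖) • innerSL ℝ ξ)) ξ :=
  ofRealCLM.hasFDerivAt.comp ξ (hasFDerivAt_comp_norm hξ hφ)

theorem wd_ofReal_comp_norm (hξ : ξ ≠ 0) (hφ : HasDerivAt φ p ‖ξ‖) :
    wd (fun z => (φ ‖z‖ : ℂ)) ξ = ((p / (2 * ‖ξ‖) : ℝ) : ℂ) * conj ξ := by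
  rw [(hasFDerivAt_ofReal_comp_norm hξ hφ).wd_eq]
  simp only [ContinuousLinearMap.comp_apply, smul_apply, coe_innerSL_apply, Complex.inner,
    smul_eq_mul, ofRealCLM_apply, one_mul, conj_re, I_mul_re, conj_im, neg_neg]
  conv_rhs => arg 2; rw [← re_add_im ξ]
  simp only [map_add, map_mul, conj_ofReal, conj_I]
  push_cast
  ring

theorem wdbarR_comp_norm (hξ : ξ ≠ 0) (hφ : HasDerivAt φ p ‖ξ‖) :
    wdbarR (fun z => φ ‖z‖) ξ = ((p / (2 * ‖ξ‖) : ℝ) : ℂ) * ξ := by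
  rw [wdbarR, (hasFDerivAt_comp_norm hξ hφ).fderiv]
  simp only [smul_apply, coe_innerSL_apply, Complex.inner, smul_eq_mul, one_mul, conj_re,
    I_mul_re, conj_im, neg_neg]
  conv_rhs => arg 2; rw [← re_add_im ξ]
  push_cast
  ring

theorem wd_ofReal_comp_norm_mul_self (hξ : ξ ≠ 0) (hφ : HasDerivAt φ p ‖ξ‖) :
    wd (fun z => (φ ‖z‖ : ℂ) * z) ξ = ((φ ‖ξ‖ + p * ‖ξ‖ / 2 : ℝ) : ℂ) := by
  rw [wd_mul (hasFDerivAt_ofReal_comp_norm hξ hφ).differentiableAt differentiableAt_fun_id,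
    wd_ofReal_comp_norm hξ hφ, wd_id, mul_assoc, conj_mul', ← ofReal_pow]
  push_cast
  field_simp
  ring

theorem wd_ofReal_comp_norm_mul_conj (hξ : ξ ≠ 0) (hφ : HasDerivAt φ p ‖ξ‖) :
    wd (fun z => (φ ‖z‖ : ℂ) * conj z) ξ = ((p / (2 * ‖ξ‖) : ℝ) : ℂ) * conj ξ ^ 2 := by
  rw [wd_mul (hasFDerivAt_ofReal_comp_norm hξ hφ).differentiableAt
      hasFDerivAt_conj.differentiableAt, wd_ofReal_comp_norm hξ hφ, wd_conj]
  ring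

end Wirtinger

section RadialSupport

variable {ρ : ℝ → ℝ} {ξ : ℂ}

theorem Fcong_comp_norm (hξ : ξ ≠ 0) (hρ : DifferentiableAt ℝ ρ ‖ξ‖) :
    Fcong (fun z => ρ ‖z‖) ξ =
      (((1 + ‖ξ‖ ^ 2) ^ 2 * deriv ρ ‖ξ‖ / (4 * ‖ξ‖) : ℝ) : ℂ) * ξ := by
  rw [Fcong, wdbarR_comp_norm hξ hρ.hasDerivAt, ← Complex.sq_norm]
  push_cast
  field_simp
  ring

theorem Fcong_comp_norm_eventuallyEq (hξ : ξ ≠ 0) (hρ : DifferentiableOn ℝ ρ (Set.Ioi 0)) :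
    Fcong (fun z => ρ ‖z‖) =ᶠ[𝓝 ξ]
      fun z => (((1 + ‖z‖ ^ 2) ^ 2 * deriv ρ ‖z‖ / (4 * ‖z‖) : ℝ) : ℂ) * z := by
  filter_upwards [isOpen_ne.mem_nhds hξ] with z hz
  exact Fcong_comp_norm hz (hρ.differentiableAt (Ioi_mem_nhds (norm_pos_iff.2 hz)))

theorem psiSlope_comp_norm (hξ : ξ ≠ 0) (hρ : DifferentiableOn ℝ ρ (Set.Ioi 0))
    (hρ' : DifferentiableAt ℝ (deriv ρ) ‖ξ‖) :
    psiSlope (fun z => ρ ‖z‖) ξ =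
      (1 + ‖ξ‖ ^ 2) ^ 2 * (deriv ρ ‖ξ‖ + ‖ξ‖ * deriv (deriv ρ) ‖ξ‖) / (8 * ‖ξ‖) := by
  have hR : 0 < ‖ξ‖ := norm_pos_iff.2 hξ
  have hquot : (fun z => Fcong (fun z => ρ ‖z‖) z / (((1 + normSq z) ^ 2 : ℝ) : ℂ)) =ᶠ[𝓝 ξ]
      fun z => ((deriv ρ ‖z‖ / (4 * ‖z‖) : ℝ) : ℂ) * z := by
    filter_upwards [Fcong_comp_norm_eventuallyEq hξ hρ] with z hz
    rw [hz, ← Complex.sq_norm]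
    have : (1 + (‖z‖ : ℂ) ^ 2) ≠ 0 := by exact_mod_cast (by positivity : (1 + ‖z‖ ^ 2) ≠ 0)
    push_cast
    field_simp
  have hg : HasDerivAt (fun s => deriv ρ s / (4 * s))
      ((deriv (deriv ρ) ‖ξ‖ * (4 * ‖ξ‖) - deriv ρ ‖ξ‖ * 4) / (4 * ‖ξ‖) ^ 2) ‖ξ‖ := by
    refine hρ'.hasDerivAt.div ?_ (by positivity)
    simpa using (hasDerivAt_id ‖ξ‖).const_mul (4 : ℝ)
  rw [psiSlope, hquot.wd_eq, wd_ofReal_comp_norm_mul_self hξ hg, ← Complex.sq_norm, ← ofReal_mul,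
    ofReal_re]
  field_simp
  ring

theorem norm_sigmaSlope_comp_norm (hξ : ξ ≠ 0) (hρ : DifferentiableOn ℝ ρ (Set.Ioi 0))
    (hρ' : DifferentiableAt ℝ (deriv ρ) ‖ξ‖) :
    ‖sigmaSlope (fun z => ρ ‖z‖) ξ‖ =
      |(1 + ‖ξ‖ ^ 2) * (‖ξ‖ * (1 + ‖ξ‖ ^ 2) * deriv (deriv ρ) ‖ξ‖
        + (3 * ‖ξ‖ ^ 2 - 1) * deriv ρ ‖ξ‖) / (8 * ‖ξ‖)| := by
  have hR : 0 < ‖ξ‖ := norm_pos_iff.2 hξ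
  have hconj : (fun z => conj (Fcong (fun z => ρ ‖z‖) z)) =ᶠ[𝓝 ξ]
      fun z => (((1 + ‖z‖ ^ 2) ^ 2 * deriv ρ ‖z‖ / (4 * ‖z‖) : ℝ) : ℂ) * conj z := by
    filter_upwards [Fcong_comp_norm_eventuallyEq hξ hρ] with z hz
    rw [hz, map_mul, conj_ofReal]
  have hG : HasDerivAt (fun s => (1 + s ^ 2) ^ 2 * deriv ρ s / (4 * s))
      (((2 * (1 + ‖ξ‖ ^ 2) * (2 * ‖ξ‖) * deriv ρ ‖ξ‖
          + (1 + ‖ξ‖ ^ 2) ^ 2 * deriv (deriv ρ) ‖ξ‖) * (4 * ‖ξ‖)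
        - (1 + ‖ξ‖ ^ 2) ^ 2 * deriv ρ ‖ξ‖ * 4) / (4 * ‖ξ‖) ^ 2) ‖ξ‖ := by
    refine HasDerivAt.div ?_ ?_ (by positivity)
    · refine HasDerivAt.mul ?_ hρ'.hasDerivAt
      simpa using ((hasDerivAt_pow 2 ‖ξ‖).const_add 1).fun_pow 2
    · simpa using (hasDerivAt_id ‖ξ‖).const_mul (4 : ℝ)
  rw [sigmaSlope, hconj.wd_eq, wd_ofReal_comp_norm_mul_conj hξ hG, norm_neg, norm_mul, norm_pow,
    norm_conj, norm_real, Real.norm_eq_abs, ← abs_of_pos (by positivity : 0 < ‖ξ‖ ^ 2),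
    ← abs_mul]
  congr 1
  simp only [abs_pow, abs_norm]
  field_simp
  ring

end RadialSupport

theorem Phi_ofReal_mul_self (ξ : ℂ) (c t : ℝ) :
    Phi ξ ((c : ℂ) * ξ) t =
      ((((2 * c * (1 - normSq ξ) + 2 * (1 + normSq ξ) * t) / (1 + normSq ξ) ^ 2 : ℝ) : ℂ) * ξ,
        (-4 * c * normSq ξ + (1 - normSq ξ * normSq ξ) * t) / (1 + normSq ξ) ^ 2) := by
  have hξ : conj ξ * ξ = (normSq ξ : ℂ) := by rw [mul_comm, mul_conj]
  rw [Phi, Prod.mk.injEq]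
  constructor
  · rw [ofReal_div, div_mul_eq_mul_div]
    congr 1
    simp only [map_mul, conj_ofReal]
    push_cast
    linear_combination (-2 * (c : ℂ) * ξ) * hξ
  · congr 1
    rw [← ofReal_re (-4 * c * normSq ξ + _)]
    congr 1
    simp only [map_mul, conj_ofReal]
    push_cast
    linear_combination (-4 * (c : ℂ)) * hξ

section FocalPoints

variable {R : ℝ} (θ P Q : ℝ)

theorem norm_ofReal_mul_exp_mul_I (hR : 0 < R) : ‖(R : ℂ) * exp (θ * I)‖ = R := by
  rw [norm_mul, norm_exp_ofReal_mul_I, norm_real, Real.norm_of_nonneg hR.le, mul_one]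

theorem Phi_focal_profile (hR : 0 < R) :
    Phi ((R : ℂ) * exp (θ * I)) ((((1 + R ^ 2) ^ 2 * P / (4 * R) : ℝ) : ℂ) * (R * exp (θ * I)))
        (-((1 + R ^ 2) ^ 2 * (P + R * Q) / (8 * R))
          - (1 + R ^ 2) * (R * (1 + R ^ 2) * Q + (3 * R ^ 2 - 1) * P) / (8 * R)) =
      ((((1 / 2) * (-R * (1 + R ^ 2) * Q + (1 - 3 * R ^ 2) * P) : ℝ) : ℂ) * exp (θ * I),
        (1 / 4) * (-(1 - R ^ 4) * Q - 2 * R * (3 - R ^ 2) * P)) := by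
  rw [Phi_ofReal_mul_self, ← Complex.sq_norm, norm_ofReal_mul_exp_mul_I θ hR, ← mul_assoc,
    ← ofReal_mul, Prod.mk.injEq]
  constructor
  · congr 2
    field_simp
    ring
  · field_simp
    ring

theorem Phi_focal_axis (hR : 0 < R) :
    Phi ((R : ℂ) * exp (θ * I)) ((((1 + R ^ 2) ^ 2 * P / (4 * R) : ℝ) : ℂ) * (R * exp (θ * I)))
        (-((1 + R ^ 2) ^ 2 * (P + R * Q) / (8 * R))
          + (1 + R ^ 2) * (R * (1 + R ^ 2) * Q + (3 * R ^ 2 - 1) * P) / (8 * R)) =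
      (0, -((1 + R ^ 2) ^ 2 / (4 * R)) * P) := by
  rw [Phi_ofReal_mul_self, ← Complex.sq_norm, norm_ofReal_mul_exp_mul_I θ hR, Prod.mk.injEq]
  constructor
  · rw [mul_eq_zero, ofReal_eq_zero]
    left
    field_simp
    ring
  · field_simp
    ring

end FocalPoints

theorem rotationally_symmetric_focal_points
    (ρ : ℝ → ℝ) (hρ : ContDiffOn ℝ 2 ρ (Set.Ioi 0))
    (r : ℂ → ℝ) (hr : ∀ ξ : ℂ, r ξ = ρ (‖ξ‖)) :
    ∀ R θ : ℝ, 0 < R →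
      (Phi ((R : ℂ) * Complex.exp (θ * Complex.I))
            (Fcong r ((R : ℂ) * Complex.exp (θ * Complex.I)))
            (-psiSlope r ((R : ℂ) * Complex.exp (θ * Complex.I))
              + ‖sigmaSlope r ((R : ℂ) * Complex.exp (θ * Complex.I))‖),
        Phi ((R : ℂ) * Complex.exp (θ * Complex.I))
            (Fcong r ((R : ℂ) * Complex.exp (θ * Complex.I)))
            (-psiSlope r ((R : ℂ) * Complex.exp (θ * Complex.I))
              - ‖sigmaSlope r ((R : ℂ) * Complex.exp (θ * Complex.I))‖)) =
        ((((1 / 2) * (-R * (1 + R ^ 2) * deriv (deriv ρ) R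
              + (1 - 3 * R ^ 2) * deriv ρ R) : ℝ) * Complex.exp (θ * Complex.I),
          (1 / 4) * (-(1 - R ^ 4) * deriv (deriv ρ) R
              - 2 * R * (3 - R ^ 2) * deriv ρ R)),
         ((0 : ℂ), -((1 + R ^ 2) ^ 2 / (4 * R)) * deriv ρ R)) ∨
      (Phi ((R : ℂ) * Complex.exp (θ * Complex.I))
            (Fcong r ((R : ℂ) * Complex.exp (θ * Complex.I)))
            (-psiSlope r ((R : ℂ) * Complex.exp (θ * Complex.I))
              + ‖sigmaSlope r ((R : ℂ) * Complex.exp (θ * Complex.I))‖),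
        Phi ((R : ℂ) * Complex.exp (θ * Complex.I))
            (Fcong r ((R : ℂ) * Complex.exp (θ * Complex.I)))
            (-psiSlope r ((R : ℂ) * Complex.exp (θ * Complex.I))
              - ‖sigmaSlope r ((R : ℂ) * Complex.exp (θ * Complex.I))‖)) =
        ((((0 : ℂ), -((1 + R ^ 2) ^ 2 / (4 * R)) * deriv ρ R)),
         ((((1 / 2) * (-R * (1 + R ^ 2) * deriv (deriv ρ) R
              + (1 - 3 * R ^ 2) * deriv ρ R) : ℝ) * Complex.exp (θ * Complex.I),
          (1 / 4) * (-(1 - R ^ 4) * deriv (deriv ρ) R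
              - 2 * R * (3 - R ^ 2) * deriv ρ R)))) := by
  intro R θ hR
  obtain rfl : r = fun z => ρ ‖z‖ := funext hr
  set ξ := (R : ℂ) * exp (θ * I)
  have hnorm : ‖ξ‖ = R := norm_ofReal_mul_exp_mul_I θ hR
  have hξ : ξ ≠ 0 := norm_pos_iff.1 (hnorm ▸ hR)
  have hdiff : DifferentiableOn ℝ ρ (Set.Ioi 0) := hρ.differentiableOn two_ne_zero
  have hdiff' : DifferentiableAt ℝ (deriv ρ) ‖ξ‖ := by
    rw [hnorm]
    exact ((hρ.deriv_of_isOpen (m := 1) isOpen_Ioi le_rfl).differentiableOn one_ne_zero R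
      hR).differentiableAt (Ioi_mem_nhds hR)
  rw [Fcong_comp_norm hξ (hdiff.differentiableAt (Ioi_mem_nhds (norm_pos_iff.2 hξ))),
    psiSlope_comp_norm hξ hdiff hdiff', norm_sigmaSlope_comp_norm hξ hdiff hdiff', hnorm]
  rcases abs_choice ((1 + R ^ 2) * (R * (1 + R ^ 2) * deriv (deriv ρ) R
      + (3 * R ^ 2 - 1) * deriv ρ R) / (8 * R)) with hs | hs <;> rw [hs]
  · exact .inr (Prod.ext (Phi_focal_axis θ _ _ hR) (Phi_focal_profile θ _ _ hR))
  · rw [← sub_eq_add_neg, sub_neg_eq_add]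
    exact .inl (Prod.ext (Phi_focal_profile θ _ _ hR) (Phi_focal_axis θ _ _ hR))

end
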